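/- arXiv:2604.25948 — 4 statements merged into one kernel-verified Lean document; each statement's English description precedes it below -/
import Mathlib

section
/- Let V be a finite type with decidable equality, G a simple graph on V, and u ≠ v two vertices that are not reachable from each other in G. Then adding the edge {u,v} decreases the number of connected components by exactly one: Nat.card ((G ⊔ SimpleGraph.fromEdgeSet {s(u,v)}).ConnectedComponent) + 1 = Nat.card (G.ConnectedComponent). -/
/-! The inclusion `G ≤ G ⊔ edge u v` induces a surjection on connected components. A walk in
`G ⊔ edge u v` that uses the new edge passes from the component of `u` to that of `v`, so the
surjection identifies these two components and nothing else. -/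

open SimpleGraph

theorem Nat.card_add_one_of_surjective_of_injOn_compl {α β : Type*} [Finite α] {f : α → β}
    (hf : Function.Surjective f) {a b : α} (hab : a ≠ b) (hfab : f a = f b)
    (hinj : Set.InjOn f {b}ᶜ) : Nat.card β + 1 = Nat.card α := by
  have himage : f '' {b}ᶜ = Set.univ := by
    refine Set.eq_univ_of_forall fun y ↦ ?_
    obtain ⟨x, rfl⟩ := hf y
    by_cases hx : x = b
    · exact ⟨a, hab, hx ▸ hfab⟩
    · exact ⟨x, hx, rfl⟩
  calc Nat.card β + 1 = (Set.univ \ {b} : Set α).ncard + 1 := by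
        rw [← Set.compl_eq_univ_sdiff, ← hinj.ncard_image, himage, Set.ncard_univ]
    _ = Nat.card α := by rw [Set.ncard_sdiff_singleton_add_one (Set.mem_univ b), Set.ncard_univ]

namespace SimpleGraph

variable {V : Type*} {G : SimpleGraph V} {u v a b : V}

theorem reachable_sup_edge_self : (G ⊔ edge u v).Reachable u v := by
  rcases eq_or_ne u v with rfl | huv
  · rfl
  · exact Adj.reachable (by simp [edge_adj, huv])

theorem reachable_sup_edge_iff :
    (G ⊔ edge u v).Reachable a b ↔ G.Reachable a b ∨
      G.Reachable a u ∧ G.Reachable v b ∨ G.Reachable a v ∧ G.Reachable u b := by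
  refine ⟨fun ⟨p⟩ ↦ ?_, ?_⟩
  · induction p with
    | nil => exact .inl .rfl
    | cons h _ ih =>
      rw [sup_adj, edge_adj] at h
      rcases h with h | ⟨⟨rfl, rfl⟩ | ⟨rfl, rfl⟩, -⟩ <;>
        grind [Adj.reachable, Reachable.trans, Reachable.refl, Reachable.symm]
  · have hle : G ≤ G ⊔ edge u v := le_sup_left
    rintro (h | ⟨hau, hvb⟩ | ⟨hav, hub⟩)
    · exact h.mono hle
    · exact (hau.mono hle).trans (reachable_sup_edge_self.trans (hvb.mono hle))
    · exact (hav.mono hle).trans (reachable_sup_edge_self.symm.trans (hub.mono hle))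

theorem ConnectedComponent.injOn_map_ofLE_sup_edge :
    Set.InjOn (ConnectedComponent.map (Hom.ofLE (le_sup_left : G ≤ G ⊔ edge u v)))
      {G.connectedComponentMk v}ᶜ := by
  intro c hc d hd hcd
  induction c using ConnectedComponent.ind with | h a =>
  induction d using ConnectedComponent.ind with | h b =>
  simp only [Set.mem_compl_singleton_iff, ne_eq, ConnectedComponent.map_mk, ConnectedComponent.eq,
    Hom.coe_ofLE, id] at hc hd hcd ⊢
  rcases reachable_sup_edge_iff.mp hcd with h | ⟨-, hvb⟩ | ⟨hav, -⟩
  · exact h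
  · exact absurd hvb.symm hd
  · exact absurd hav hc

end SimpleGraph

theorem bridge_decreases_components_general {V : Type*} [Fintype V]
    (G : SimpleGraph V) (u v : V) (hreach : ¬ G.Reachable u v) :
    Nat.card ((G ⊔ SimpleGraph.fromEdgeSet {s(u, v)}).ConnectedComponent) + 1 =
      Nat.card G.ConnectedComponent :=
  Nat.card_add_one_of_surjective_of_injOn_compl
    (ConnectedComponent.surjective_map_ofLE le_sup_left)
    (fun h ↦ hreach (ConnectedComponent.exact h))
    (ConnectedComponent.sound reachable_sup_edge_self)
    ConnectedComponent.injOn_map_ofLE_sup_edge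

/-- Adding a temporal bridge (an edge whose endpoints lie in distinct connected
components) to a graph on a finite vertex set decreases the number of connected
components by exactly one. -/
theorem bridge_decreases_components {V : Type*} [Fintype V] [DecidableEq V]
    (G : SimpleGraph V) (u v : V) (huv : u ≠ v) (hreach : ¬ G.Reachable u v) :
    Nat.card ((G ⊔ SimpleGraph.fromEdgeSet {s(u, v)}).ConnectedComponent) + 1 =
      Nat.card G.ConnectedComponent :=
  bridge_decreases_components_general G u v hreach
end

section
/- Let k be a field, σ a type, and I an ideal of MvPolynomial σ k generated by a set of monomials (elements of the form MvPolynomial.monomial m 1 for m : σ →₀ ℕ). Then the family of residue classes of those monomials that do not belong to I is linearly independent over k in the quotient ring MvPolynomial σ k ⧸ I: the map sending each m in { m : σ →₀ ℕ | monomial m 1 ∉ I } to Ideal.Quotient.mk I (monomial m 1) is a linearly independent family over k. -/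
open MvPolynomial

/-- For a monomial ideal `I` of `MvPolynomial σ k` over a field `k`, the
residue classes of the monomials not lying in `I` form a linearly independent
family over `k` in the quotient `MvPolynomial σ k ⧸ I`. -/
theorem monomials_linearIndependent_in_quotient {k : Type*} [Field k] {σ : Type*}
    (S : Set (σ →₀ ℕ)) (I : Ideal (MvPolynomial σ k))
    (hI : I = Ideal.span ((fun m : σ →₀ ℕ =>
      (monomial m (1 : k) : MvPolynomial σ k)) '' S)) :
    LinearIndependent k
      (fun m : { m : σ →₀ ℕ // (monomial m (1 : k) : MvPolynomial σ k) ∉ I } =>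
        Ideal.Quotient.mk I (monomial m.1 (1 : k))) := by
  classical
  rw [linearIndependent_iff']
  intro t c hsum j hj
  by_contra hc
  set p : MvPolynomial σ k := ∑ i ∈ t, c i • monomial i.1 (1 : k) with hp
  have hmem : p ∈ I := by
    rw [← Ideal.Quotient.eq_zero_iff_mem]
    have : Ideal.Quotient.mk I p = Ideal.Quotient.mkₐ k I p := rfl
    rw [this, hp, map_sum]
    simpa using hsum
  have hcoeff : coeff j.1 p = c j := by
    rw [hp, MvPolynomial.coeff_sum]
    rw [Finset.sum_eq_single j]
    · rw [coeff_smul, smul_eq_mul, coeff_monomial, if_pos rfl, mul_one]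
    · intro i hi hij
      rw [coeff_smul, smul_eq_mul, coeff_monomial, if_neg (fun h => hij (Subtype.ext h)), mul_zero]
    · intro h; exact absurd hj h
  have hsup : j.1 ∈ p.support := by
    rw [MvPolynomial.mem_support_iff, hcoeff]; exact hc
  rw [hI, mem_ideal_span_monomial_image] at hmem
  obtain ⟨s, hs, hle⟩ := hmem j.1 hsup
  apply j.2
  have heq : (monomial j.1 (1 : k) : MvPolynomial σ k)
      = monomial (j.1 - s) 1 * monomial s 1 := by
    rw [monomial_mul, one_mul, tsub_add_cancel_of_le hle]
  rw [heq]
  exact Ideal.mul_mem_left _ _ (hI ▸ Ideal.subset_span ⟨s, hs, rfl⟩)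
end

section
/- Let k be a field, V a type, and E₁ ⊆ V × V a set of ordered pairs with a ≠ b for every (a,b) ∈ E₁, with edge ideal I₁ = I(E₁) in MvPolynomial V k. Let S be a set of pairs (u,v) ∈ V × V with u ≠ v, such that (u,v) ∉ E₁ and (v,u) ∉ E₁ for every (u,v) ∈ S, and such that distinct elements of S determine distinct unordered pairs {u,v}. Then the family sending (u,v) ∈ S to the residue class Ideal.Quotient.mk I₁ (X_u * X_v) in MvPolynomial V k ⧸ I₁ is linearly independent over k. -/
open MvPolynomial

/-- The edge ideal of a set of ordered pairs `E ⊆ V × V`: the ideal of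
`MvPolynomial V k` generated by the monomials `X u * X v` for `(u, v) ∈ E`. -/
noncomputable def edgeIdeal (k : Type*) [CommRing k] {V : Type*} (E : Set (V × V)) :
    Ideal (MvPolynomial V k) :=
  Ideal.span ((fun e : V × V => (X e.1 * X e.2 : MvPolynomial V k)) '' E)

theorem key {V : Type*} {a b u v : V} (hab : a ≠ b) (huv : u ≠ v)
    (h : (Finsupp.single a 1 + Finsupp.single b 1 : V →₀ ℕ) ≤
      Finsupp.single u 1 + Finsupp.single v 1) :
    (a = u ∧ b = v) ∨ (a = v ∧ b = u) := by
  classical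
  have ha : a = u ∨ a = v := by
    by_contra hc
    push_neg at hc
    have := h a
    simp [Finsupp.single_apply, hc.1, hc.2, Ne.symm hc.1, Ne.symm hc.2] at this
  have hb : b = u ∨ b = v := by
    by_contra hc
    push_neg at hc
    have := h b
    simp [Finsupp.single_apply, hc.1, hc.2, Ne.symm hc.1, Ne.symm hc.2, Ne.symm hab] at this
  rcases ha with rfl | rfl <;> rcases hb with rfl | rfl
  · exact absurd rfl hab
  · exact Or.inl ⟨rfl, rfl⟩
  · exact Or.inr ⟨rfl, rfl⟩
  · exact absurd rfl hab

/-- Linear independence of bridges: the residue classes of the monomials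
`X u * X v`, for pairs `(u,v) ∈ S` of distinct vertices not occurring
(in either order) in `E₁` and determining pairwise distinct unordered pairs,
are linearly independent over `k` in `MvPolynomial V k ⧸ edgeIdeal k E₁`. -/
theorem bridges_linearIndependent {k : Type*} [Field k] {V : Type*}
    (E₁ : Set (V × V)) (hE₁ : ∀ e ∈ E₁, e.1 ≠ e.2)
    (S : Set (V × V))
    (hSne : ∀ e ∈ S, e.1 ≠ e.2)
    (hSnew : ∀ e ∈ S, (e.1, e.2) ∉ E₁ ∧ (e.2, e.1) ∉ E₁)
    (hSdist : ∀ e ∈ S, ∀ f ∈ S, e ≠ f → s(e.1, e.2) ≠ s(f.1, f.2)) :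
    LinearIndependent k
      (fun e : S => Ideal.Quotient.mk (edgeIdeal k E₁)
        (X e.1.1 * X e.1.2 : MvPolynomial V k)) := by
  classical
  set m : V × V → (V →₀ ℕ) := fun e => Finsupp.single e.1 1 + Finsupp.single e.2 1 with hm
  have hXm : ∀ e : V × V, (X e.1 * X e.2 : MvPolynomial V k) = monomial (m e) 1 := by
    intro e
    rw [X, X, monomial_mul, one_mul]
  have hI : edgeIdeal k E₁ =
      Ideal.span ((fun s => monomial s (1 : k)) '' (m '' E₁)) := by
    rw [edgeIdeal, Set.image_image]
    congr 1
    ext x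
    simp only [Set.mem_image]
    exact ⟨fun ⟨e, he, hx⟩ => ⟨e, he, by rw [← hx, hXm]⟩,
      fun ⟨e, he, hx⟩ => ⟨e, he, by rw [← hx, hXm]⟩⟩
  rw [linearIndependent_iff']
  intro t g hsum j hj
  by_contra hgj
  set p : MvPolynomial V k := ∑ i ∈ t, monomial (m i.1) (g i) with hp
  have hq : Ideal.Quotient.mkₐ k (edgeIdeal k E₁) p = 0 := by
    rw [hp, map_sum, ← hsum]
    refine Finset.sum_congr rfl fun i _ => ?_
    rw [hXm, ← Ideal.Quotient.mkₐ_eq_mk (R₁ := k), ← map_smul, smul_monomial,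
      smul_eq_mul, mul_one]
  have hmem : p ∈ edgeIdeal k E₁ := by
    rwa [Ideal.Quotient.mkₐ_eq_mk, Ideal.Quotient.eq_zero_iff_mem] at hq
  -- injectivity of m on S
  have hminj : ∀ i ∈ t, i ≠ j → m i.1 ≠ m j.1 := by
    intro i _ hij hmij
    have h1 := key (hSne i.1 i.2) (hSne j.1 j.2) (le_of_eq hmij)
    apply hSdist i.1 i.2 j.1 j.2 (fun hh => hij (Subtype.ext hh))
    rw [Sym2.eq_iff]
    tauto
  have hcoeff : p.coeff (m j.1) = g j := by
    rw [hp, MvPolynomial.coeff_sum]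
    rw [Finset.sum_eq_single j (fun i hi hij => by
      rw [coeff_monomial, if_neg (hminj i hi hij)]) (fun h => absurd hj h)]
    rw [coeff_monomial, if_pos rfl]
  have hsupp : m j.1 ∈ p.support := by
    rw [MvPolynomial.mem_support_iff, hcoeff]; exact hgj
  rw [hI, mem_ideal_span_monomial_image] at hmem
  obtain ⟨si, hsi, hle⟩ := hmem (m j.1) hsupp
  obtain ⟨e, heE, rfl⟩ := hsi
  rcases key (hE₁ e heE) (hSne j.1 j.2) hle with ⟨h1, h2⟩ | ⟨h1, h2⟩
  · exact (hSnew j.1 j.2).1 (by rw [← h1, ← h2]; simpa using heE)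
  · exact (hSnew j.1 j.2).2 (by rw [← h1, ← h2]; simpa using heE)
end

section
/- Let k be a commutative ring, V and V' types, E : ℕ → Set (V × V) and E' : ℕ → Set (V' × V') families of edge sets, and φ : V → V' a map preserving the filtration: for all n, (u,v) ∈ E n implies (φ u, φ v) ∈ E' n. Let I n = I(E n) and I' n = I(E' n) be the corresponding edge ideals. If p : Polynomial (MvPolynomial V k) satisfies p.coeff n ∈ I n for all n, then the polynomial obtained by applying MvPolynomial.rename φ to each coefficient of p satisfies (mapped p).coeff n ∈ I' n for all n. That is, the induced graded map sends CERA(G) into CERA(G'). -/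
open MvPolynomial

section EdgeIdeal

variable {k : Type*} [CommRing k] {V V' : Type*}

theorem edgeIdeal_mono {E F : Set (V × V)} (h : E ⊆ F) : edgeIdeal k E ≤ edgeIdeal k F :=
  Ideal.span_mono (Set.image_mono h)

theorem edgeIdeal_map_rename (φ : V → V') (E : Set (V × V)) :
    (edgeIdeal k E).map (rename (R := k) φ) = edgeIdeal k (Prod.map φ φ '' E) := by
  rw [edgeIdeal, edgeIdeal, Ideal.map_span, Set.image_image, Set.image_image]
  simp only [map_mul, rename_X, Prod.map_fst, Prod.map_snd]

theorem map_rename_mem_edgeIdeal {φ : V → V'} {E : Set (V × V)} {E' : Set (V' × V')}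
    (hφ : ∀ e ∈ E, (φ e.1, φ e.2) ∈ E') {q : MvPolynomial V k} (hq : q ∈ edgeIdeal k E) :
    rename φ q ∈ edgeIdeal k E' := by
  have hle : (edgeIdeal k E).map (rename (R := k) φ) ≤ edgeIdeal k E' := by
    rw [edgeIdeal_map_rename]
    exact edgeIdeal_mono (Set.image_subset_iff.2 hφ)
  exact hle (Ideal.mem_map_of_mem _ hq)

end EdgeIdeal

/-- Functoriality of CERA on morphisms: a filtration-preserving vertex map
`φ : V → V'` induces, via renaming each coefficient, a map sending CERA(G)
into CERA(G'): if `p.coeff n ∈ I(E n)` for all `n`, then applying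
`MvPolynomial.rename φ` coefficientwise gives a polynomial whose `n`-th
coefficient lies in `I(E' n)` for all `n`. -/
theorem cera_functorial {k : Type*} [CommRing k] {V V' : Type*}
    (E : ℕ → Set (V × V)) (E' : ℕ → Set (V' × V')) (φ : V → V')
    (hφ : ∀ n, ∀ e ∈ E n, (φ e.1, φ e.2) ∈ E' n)
    (p : Polynomial (MvPolynomial V k))
    (hp : ∀ n, p.coeff n ∈ edgeIdeal k (E n)) :
    ∀ n, (p.map (rename (R := k) φ).toRingHom).coeff n ∈ edgeIdeal k (E' n) := by
  intro n
  rw [Polynomial.coeff_map]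
  exact map_rename_mem_edgeIdeal (hφ n) (hp n)
end
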